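/- In the four-state protocol of Algorithm 2, once a configuration with #token ≤ 1 is reached, no agent ever changes its color in any subsequent configuration: every reachable configuration from such a configuration assigns each agent the same color it had. -/

import Mathlib

/-- States of the four-state protocol: r^ω, b^ω, r, b. -/
inductive St : Type
  | rw | bw | r | b
deriving DecidableEq

/-- Deterministic transition function of the protocol. -/
def delta : St → St → St × St
  | .rw, .rw => (.r, .b)
  | .rw, .bw => (.b, .b)
  | .bw, .rw => (.b, .b)
  | .rw, .r  => (.r, .rw)
  | .r,  .rw => (.rw, .r)
  | .bw, .b  => (.b, .bw)
  | .b,  .bw => (.bw, .b)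
  | .rw, .b  => (.r, .bw)
  | .b,  .rw => (.bw, .r)
  | .bw, .r  => (.b, .rw)
  | .r,  .bw => (.rw, .b)
  | p, q     => (p, q)

/-- One step: apply the rule to an ordered pair of distinct agents. -/
def Step {n : ℕ} (C C' : Fin n → St) : Prop :=
  ∃ i j : Fin n, i ≠ j ∧
    C' = Function.update (Function.update C i (delta (C i) (C j)).1) j
          (delta (C i) (C j)).2

/-- Number of agents in state `s`. -/
def cnt {n : ℕ} (C : Fin n → St) (s : St) : ℕ :=
  (Finset.univ.filter fun a => C a = s).card

/-- Number of token-holding agents (state r^ω or b^ω). -/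
def tokens {n : ℕ} (C : Fin n → St) : ℕ := cnt C .rw + cnt C .bw

/-- Number of red agents (state r^ω or r). -/
def reds {n : ℕ} (C : Fin n → St) : ℕ := cnt C .rw + cnt C .r

/-- Number of blue agents (state b^ω or b). -/
def blues {n : ℕ} (C : Fin n → St) : ℕ := cnt C .bw + cnt C .b

/-- Color of a state: `true` = red, `false` = blue. -/
def isRed : St → Bool
  | .rw => true
  | .r  => true
  | .bw => false
  | .b  => false

/-!
Unless both interacting agents hold a token, a transition keeps the colour of each agent and
exchanges their tokens. So while at most one agent holds a token, a step permutes the set of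
token holders, which therefore stays a subsingleton, and changes no colour.
-/

open Finset Function

def isToken : St → Bool
  | .rw | .bw => true
  | .r | .b => false

lemma isRed_delta (p q : St) (h : ¬(isToken p ∧ isToken q)) :
    isRed (delta p q).1 = isRed p ∧ isRed (delta p q).2 = isRed q := by
  cases p <;> cases q <;> simp_all [delta, isToken, isRed]

lemma isToken_delta (p q : St) (h : ¬(isToken p ∧ isToken q)) :
    isToken (delta p q).1 = isToken q ∧ isToken (delta p q).2 = isToken p := by
  cases p <;> cases q <;> simp_all [delta, isToken]

lemma tokens_eq_card {n : ℕ} (C : Fin n → St) : tokens C = #{a | isToken (C a)} := by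
  have hdisj : Disjoint (α := Finset (Fin n)) {a | C a = .rw} {a | C a = .bw} :=
    disjoint_filter.2 fun a _ h => by simp [h]
  rw [tokens, cnt, cnt, ← card_union_of_disjoint hdisj, ← filter_or]
  congr 1
  ext a
  simp only [mem_filter, mem_univ, true_and]
  cases C a <;> simp [isToken]

lemma tokenSet_subsingleton_of_tokens_le_one {n : ℕ} {C : Fin n → St} (h : tokens C ≤ 1) :
    {a | isToken (C a)}.Subsingleton := by
  rw [tokens_eq_card, card_le_one] at h
  exact fun a ha b hb => h a (by simpa using ha) b (by simpa using hb)

section Step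

variable {n : ℕ} {C C' : Fin n → St}

lemma not_isToken_and_isToken (hC : {a | isToken (C a)}.Subsingleton) {i j : Fin n}
    (hij : i ≠ j) :
    ¬(isToken (C i) ∧ isToken (C j)) :=
  fun ⟨hi, hj⟩ => hij (hC hi hj)

lemma isRed_comp_of_step (hC : {a | isToken (C a)}.Subsingleton) (h : Step C C') :
    isRed ∘ C' = isRed ∘ C := by
  obtain ⟨i, j, hij, rfl⟩ := h
  obtain ⟨hi, hj⟩ := isRed_delta _ _ (not_isToken_and_isToken hC hij)
  rw [comp_update, comp_update, hi, hj]
  exact (congrArg (update · j _) (update_eq_self i _)).trans (update_eq_self j _)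

lemma exists_swap_isToken_comp_of_step (hC : {a | isToken (C a)}.Subsingleton)
    (h : Step C C') : ∃ i j, isToken ∘ C' = isToken ∘ C ∘ Equiv.swap i j := by
  obtain ⟨i, j, hij, rfl⟩ := h
  obtain ⟨hi, hj⟩ := isToken_delta _ _ (not_isToken_and_isToken hC hij)
  refine ⟨i, j, ?_⟩
  rw [← comp_assoc, Equiv.comp_swap_eq_update, comp_update, comp_update, hi, hj,
    update_comm hij]
  rfl

lemma tokenSet_subsingleton_of_step (hC : {a | isToken (C a)}.Subsingleton) (h : Step C C') :
    {a | isToken (C' a)}.Subsingleton := by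
  obtain ⟨i, j, hswap⟩ := exists_swap_isToken_comp_of_step hC h
  have hset : {a | isToken (C' a)} = Equiv.swap i j ⁻¹' {a | isToken (C a)} := by
    ext a
    simpa using congrFun hswap a
  rw [hset]
  exact hC.preimage (Equiv.swap i j).injective

end Step

theorem stmt5 (n : ℕ) (C : Fin n → St) (htok : tokens C ≤ 1)
    (C' : Fin n → St) (hreach : Relation.ReflTransGen Step C C') :
    ∀ a : Fin n, isRed (C' a) = isRed (C a) := by
  suffices {a | isToken (C' a)}.Subsingleton ∧ isRed ∘ C' = isRed ∘ C from
    fun a => congrFun this.2 a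
  induction hreach with
  | refl => exact ⟨tokenSet_subsingleton_of_tokens_le_one htok, rfl⟩
  | tail _ hstep ih =>
    exact ⟨tokenSet_subsingleton_of_step ih.1 hstep, (isRed_comp_of_step ih.1 hstep).trans ih.2⟩
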